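/- arXiv:2310.14797 — 2 statements merged into one kernel-verified Lean document; each statement's English description precedes it below -/
import Mathlib

section
/- Let a_n, b_n (1 ≤ n ≤ N) be complex numbers with |a_n| ≤ b_n (so in particular b_n are nonnegative reals), and let R, S ⊆ ℝ be finite sets. Then Σ_{t ∈ R, s ∈ S} |Σ_{n=1}^{N} a_n n^{i(t-s)}|² ≤ (Σ_{t, t' ∈ R} |Σ_{n=1}^{N} b_n n^{i(t-t')}|²)^{1/2} · (Σ_{s, s' ∈ S} |Σ_{n=1}^{N} b_n n^{i(s-s')}|²)^{1/2}. -/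
/-!
Write `u t n = n^{it}`, so that `n^{i(t-s)} = u t n * conj (u s n)`. Expanding the square and
exchanging the order of summation turns the left-hand side into
`∑_{n,m} aₙ conj(aₘ) K_R(n,m) conj(K_S(n,m))` with the Gram kernel `K_R(n,m) = ∑_{t∈R} u t n conj(u t m)`.
Bounding it in absolute value by `∑_{n,m} bₙ bₘ |K_R(n,m)| |K_S(n,m)|` and applying Cauchy–Schwarz with
the weights `bₙ bₘ ≥ 0` gives the claim, because the same expansion with `a = b` and `R = S` identifies
`∑_{n,m} bₙ bₘ |K_R(n,m)|²` with `∑_{t,t'∈R} |∑ₙ bₙ n^{i(t-t')}|²`.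
-/
open Finset ComplexConjugate

namespace Finset

lemma sum_mul_mul_le_sqrt_mul_sqrt {κ : Type*} (s : Finset κ) {w : κ → ℝ} (hw : ∀ i ∈ s, 0 ≤ w i)
    (f g : κ → ℝ) :
    ∑ i ∈ s, w i * (f i * g i) ≤ √(∑ i ∈ s, w i * f i ^ 2) * √(∑ i ∈ s, w i * g i ^ 2) := by
  have hf : ∀ i ∈ s, 0 ≤ w i * f i ^ 2 := fun i hi => mul_nonneg (hw i hi) (sq_nonneg _)
  have hg : ∀ i ∈ s, 0 ≤ w i * g i ^ 2 := fun i hi => mul_nonneg (hw i hi) (sq_nonneg _)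
  have hsq : (∑ i ∈ s, w i * (f i * g i)) ^ 2
      ≤ (∑ i ∈ s, w i * f i ^ 2) * ∑ i ∈ s, w i * g i ^ 2 :=
    sum_sq_le_sum_mul_sum_of_sq_le_mul s hf hg fun i _ => le_of_eq (by ring)
  exact (Real.le_sqrt_of_sq_le hsq).trans_eq (Real.sqrt_mul (sum_nonneg hf) _)

end Finset

section GramKernel

variable {𝕜 α β ι : Type*} [RCLike 𝕜]

def gramKernel (R : Finset α) (u : α → ι → 𝕜) (n m : ι) : 𝕜 :=
  ∑ t ∈ R, u t n * conj (u t m)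

lemma sum_sum_norm_sq_eq_sum_sum_gramKernel (I : Finset ι) (a : ι → 𝕜) (R : Finset α)
    (u : α → ι → 𝕜) (S : Finset β) (v : β → ι → 𝕜) :
    ((∑ t ∈ R, ∑ s ∈ S, ‖∑ n ∈ I, a n * u t n * conj (v s n)‖ ^ 2 : ℝ) : 𝕜)
      = ∑ n ∈ I, ∑ m ∈ I, a n * conj (a m) * (gramKernel R u n m * conj (gramKernel S v n m)) := by
  push_cast
  simp_rw [← RCLike.mul_conj, map_sum, sum_mul_sum, gramKernel, map_sum, sum_mul_sum, mul_sum]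
  simp only [sum_comm (s := S) (t := I), sum_comm (s := R) (t := I)]
  refine sum_congr rfl fun n _ => sum_congr rfl fun m _ => sum_congr rfl fun t _ =>
    sum_congr rfl fun s _ => ?_
  simp only [map_mul, RCLike.conj_conj]
  ring

lemma sum_sum_norm_sq_le_sum_sum_norm_gramKernel (I : Finset ι) (a : ι → 𝕜) (R : Finset α)
    (u : α → ι → 𝕜) (S : Finset β) (v : β → ι → 𝕜) :
    ∑ t ∈ R, ∑ s ∈ S, ‖∑ n ∈ I, a n * u t n * conj (v s n)‖ ^ 2
      ≤ ∑ n ∈ I, ∑ m ∈ I, ‖a n‖ * ‖a m‖ * (‖gramKernel R u n m‖ * ‖gramKernel S v n m‖) := by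
  have hnonneg : 0 ≤ ∑ t ∈ R, ∑ s ∈ S, ‖∑ n ∈ I, a n * u t n * conj (v s n)‖ ^ 2 := by positivity
  calc ∑ t ∈ R, ∑ s ∈ S, ‖∑ n ∈ I, a n * u t n * conj (v s n)‖ ^ 2
      = ‖((∑ t ∈ R, ∑ s ∈ S, ‖∑ n ∈ I, a n * u t n * conj (v s n)‖ ^ 2 : ℝ) : 𝕜)‖ := by
        rw [RCLike.norm_ofReal, abs_of_nonneg hnonneg]
    _ ≤ ∑ n ∈ I, ∑ m ∈ I, ‖a n * conj (a m) * (gramKernel R u n m * conj (gramKernel S v n m))‖ := by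
        rw [sum_sum_norm_sq_eq_sum_sum_gramKernel]
        exact (norm_sum_le _ _).trans (sum_le_sum fun n _ => norm_sum_le _ _)
    _ = _ := by simp only [norm_mul, RCLike.norm_conj]

lemma sum_sum_norm_sq_eq_sum_sum_norm_gramKernel_sq (I : Finset ι) (b : ι → ℝ) (R : Finset α)
    (u : α → ι → 𝕜) :
    ∑ t ∈ R, ∑ t' ∈ R, ‖∑ n ∈ I, (b n : 𝕜) * u t n * conj (u t' n)‖ ^ 2
      = ∑ n ∈ I, ∑ m ∈ I, b n * b m * ‖gramKernel R u n m‖ ^ 2 := by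
  apply RCLike.ofReal_injective (K := 𝕜)
  rw [sum_sum_norm_sq_eq_sum_sum_gramKernel]
  push_cast
  simp only [RCLike.conj_ofReal, RCLike.mul_conj]

end GramKernel

lemma Complex.exp_I_mul_sub_mul_eq_mul_conj (t s x : ℝ) :
    Complex.exp (Complex.I * ((t : ℂ) - s) * x)
      = Complex.exp (Complex.I * t * x) * conj (Complex.exp (Complex.I * s * x)) := by
  rw [← Complex.exp_conj, ← Complex.exp_add]
  congr 1
  simp only [map_mul, Complex.conj_I, Complex.conj_ofReal]
  ring

open Complex in
/-- Bourgain's lemma on Dirichlet polynomials over difference sets: if `|aₙ| ≤ bₙ` for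
`1 ≤ n ≤ N` and `R, S` are finite sets of reals, then
`∑_{t ∈ R, s ∈ S} |∑ₙ aₙ n^{i(t-s)}|² ≤ (∑_{t,t' ∈ R} |∑ₙ bₙ n^{i(t-t')}|²)^{1/2} ·
(∑_{s,s' ∈ S} |∑ₙ bₙ n^{i(s-s')}|²)^{1/2}`. -/
theorem stmt5 (N : ℕ) (a : ℕ → ℂ) (b : ℕ → ℝ)
    (hab : ∀ n ∈ Finset.Icc 1 N, ‖a n‖ ≤ b n)
    (R S : Finset ℝ) :
    ∑ t ∈ R, ∑ s ∈ S,
        ‖∑ n ∈ Finset.Icc 1 N, a n * Complex.exp (Complex.I * ((t : ℂ) - s) * Real.log n)‖ ^ 2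
      ≤ (∑ t ∈ R, ∑ t' ∈ R,
          ‖∑ n ∈ Finset.Icc 1 N, (b n : ℂ) * Complex.exp (Complex.I * ((t : ℂ) - t') * Real.log n)‖ ^ 2) ^ ((1 : ℝ) / 2)
        * (∑ s ∈ S, ∑ s' ∈ S,
          ‖∑ n ∈ Finset.Icc 1 N, (b n : ℂ) * Complex.exp (Complex.I * ((s : ℂ) - s') * Real.log n)‖ ^ 2) ^ ((1 : ℝ) / 2) := by
  set I := Finset.Icc 1 N
  set u : ℝ → ℕ → ℂ := fun t n => Complex.exp (Complex.I * t * Real.log n)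
  have hb : ∀ n ∈ I, 0 ≤ b n := fun n hn => (norm_nonneg _).trans (hab n hn)
  simp only [Complex.exp_I_mul_sub_mul_eq_mul_conj, ← mul_assoc, ← Real.sqrt_eq_rpow]
  calc _ ≤ ∑ n ∈ I, ∑ m ∈ I, ‖a n‖ * ‖a m‖ * (‖gramKernel R u n m‖ * ‖gramKernel S u n m‖) :=
        sum_sum_norm_sq_le_sum_sum_norm_gramKernel I a R u S u
    _ ≤ ∑ n ∈ I, ∑ m ∈ I, b n * b m * (‖gramKernel R u n m‖ * ‖gramKernel S u n m‖) := by
        gcongr with n hn m hm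
        exacts [hb n hn, hab n hn, hab m hm]
    _ ≤ √(∑ n ∈ I, ∑ m ∈ I, b n * b m * ‖gramKernel R u n m‖ ^ 2)
          * √(∑ n ∈ I, ∑ m ∈ I, b n * b m * ‖gramKernel S u n m‖ ^ 2) := by
        simp only [← sum_product']
        exact sum_mul_mul_le_sqrt_mul_sqrt _ (fun p hp => mul_nonneg (hb _ (mem_product.1 hp).1)
          (hb _ (mem_product.1 hp).2)) _ _
    _ = _ := by
        rw [← sum_sum_norm_sq_eq_sum_sum_norm_gramKernel_sq I b R u,
          ← sum_sum_norm_sq_eq_sum_sum_norm_gramKernel_sq I b S u]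
        rfl
end

section
/- Let F(t) = Σ_{N < n ≤ 2N} b_n n^{-it} with |b_n| ≤ 1, and suppose ψ : ℝ → ℂ is a Schwartz-type function satisfying |ψ(x)| ≤ C e^{-|x|^{2/3}} whose Fourier transform ψ̂ equals 1 identically on [1, 2]. Then for every t ∈ ℝ and N ≥ 2, |F(t)| ≤ (C' log N) ∫_{|v| < log N} |F(t+v)| dv + C'' , where C', C'' depend only on C. -/
/-!
Rescaling `ψ` by `L = log N` gives a kernel whose Fourier transform is `1` at every frequency
`log n` with `N < n ≤ 2N`, so the Dirichlet polynomial reproduces itself: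
`F(t) = L ∫ ψ(L v) F(t + v) dv`. On `|v| < L` the kernel is at most `C`. On `|v| ≥ L` we have
`|L v|^{2/3} ≥ L^{4/3}`, so the kernel gains a factor `exp(-L^{4/3}/2)`, which beats the trivial
bound `|F| ≤ N = e^L` uniformly in `N`.
-/

open MeasureTheory Real Complex Set

theorem integrable_exp_neg_mul_abs_rpow {b p : ℝ} (hb : 0 < b) (hp : 0 < p) :
    Integrable fun x : ℝ => rexp (-b * |x| ^ p) := by
  have := (integrable_fun_norm_addHaar (volume : Measure ℝ)
    (f := fun y : ℝ => rexp (-b * y ^ p))).2 ?_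
  · simpa using this
  · simpa using integrableOn_rpow_mul_exp_neg_mul_rpow (s := 0) (by norm_num) hp hb

theorem two_mul_le_rpow_four_thirds_add {x : ℝ} (hx : 0 ≤ x) :
    2 * x ≤ x ^ ((4 : ℝ) / 3) + 16 := by
  rcases le_or_gt x 8 with h | h
  · linarith [rpow_nonneg hx ((4 : ℝ) / 3)]
  · have hsplit : x ^ ((4 : ℝ) / 3) = x * x ^ ((1 : ℝ) / 3) := by
      rw [show (4 : ℝ) / 3 = 1 + 1 / 3 by norm_num, rpow_add (by linarith), rpow_one]
    have hcube : (2 : ℝ) ≤ x ^ ((1 : ℝ) / 3) := by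
      calc (2 : ℝ) = (2 ^ (3 : ℝ)) ^ ((1 : ℝ) / 3) := by
            rw [← rpow_mul (by norm_num)]; norm_num
        _ ≤ x ^ ((1 : ℝ) / 3) := by gcongr; norm_num; linarith
    rw [hsplit]
    nlinarith

theorem rpow_four_thirds_le_abs_mul_rpow {L v : ℝ} (hL : 0 ≤ L) (hv : L ≤ |v|) :
    L ^ ((4 : ℝ) / 3) ≤ |L * v| ^ ((2 : ℝ) / 3) := by
  calc L ^ ((4 : ℝ) / 3) = (L * L) ^ ((2 : ℝ) / 3) := by
        rw [← sq, ← rpow_natCast_mul hL]; norm_num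
    _ ≤ |L * v| ^ ((2 : ℝ) / 3) := by
        rw [abs_mul, abs_of_nonneg hL]; gcongr

theorem log_div_log_mem_Icc {N n : ℕ} (hN : 1 < N) (hn : N < n ∧ n ≤ 2 * N) :
    Real.log n / Real.log N ∈ Icc (1 : ℝ) 2 := by
  have hN0 : (0 : ℝ) < N := by positivity
  have hlogN : 0 < Real.log N := log_pos (by exact_mod_cast hN)
  have hNn : (N : ℝ) < n := by exact_mod_cast hn.1
  have hn2N : (n : ℝ) ≤ 2 * N := by exact_mod_cast hn.2
  have hlog2 : Real.log 2 ≤ Real.log N := log_le_log two_pos (by exact_mod_cast hN)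
  constructor
  · rw [le_div_iff₀ hlogN, one_mul]
    exact log_le_log hN0 hNn.le
  · rw [div_le_iff₀ hlogN]
    calc Real.log n ≤ Real.log (2 * N) := log_le_log (hN0.trans hNn) hn2N
      _ = Real.log 2 + Real.log N := log_mul two_ne_zero hN0.ne'
      _ ≤ 2 * Real.log N := by linarith

theorem setIntegral_Ioo_add_const {f : ℝ → ℝ} {L : ℝ} (hL : 0 ≤ L)
    (hf : IntegrableOn f (Ioo (-L) L)) (c : ℝ) :
    ∫ v in Ioo (-L) L, (f v + c) = (∫ v in Ioo (-L) L, f v) + 2 * L * c := by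
  rw [integral_add hf (integrableOn_const measure_Ioo_lt_top.ne), setIntegral_const,
    volume_real_Ioo_of_le (by linarith), smul_eq_mul]
  ring

theorem integrable_of_integral_mul_exp_ne_zero {ψ : ℝ → ℂ} {ξ : ℝ}
    (h : ∫ x : ℝ, ψ x * cexp (-(I * ξ * x)) ≠ 0) : Integrable ψ := by
  have hint : Integrable fun x : ℝ => ψ x * cexp (-(I * ξ * x)) := by
    by_contra hni
    exact h (integral_undef hni)
  refine (hint.mul_bdd (g := fun x : ℝ => cexp (I * ξ * x)) (c := 1) (by fun_prop)
    (ae_of_all _ fun x => ?_)).congr (ae_of_all _ fun x => ?_)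
  · rw [norm_exp]; simp
  · simp only [mul_assoc, ← Complex.exp_add, neg_add_cancel, Complex.exp_zero, mul_one]

theorem norm_exp_neg_I_mul_mul (t l : ℝ) : ‖cexp (-(I * t) * l)‖ = 1 := by
  rw [show -(I * t) * l = ↑(-(t * l)) * I by push_cast; ring, norm_exp_ofReal_mul_I]

theorem exp_mul_eq_smul_integral {ψ : ℝ → ℂ} {L l : ℝ} (hL : 0 < L)
    (hψ : ∫ x : ℝ, ψ x * cexp (-(I * ↑(l / L) * x)) = 1) (t : ℝ) :
    cexp (-(I * t) * l) = L • ∫ v : ℝ, ψ (L * v) * cexp (-(I * ↑(t + v)) * l) := by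
  have hscale := Measure.integral_comp_mul_left
    (fun x : ℝ => ψ x * cexp (-(I * ↑(l / L) * x))) L
  rw [hψ, abs_of_pos (inv_pos.2 hL)] at hscale
  have hL' : (L : ℂ) ≠ 0 := ofReal_ne_zero.2 hL.ne'
  have hfactor : ∀ v : ℝ, ψ (L * v) * cexp (-(I * ↑(t + v)) * l) =
      cexp (-(I * t) * l) * (ψ (L * v) * cexp (-(I * ↑(l / L) * ↑(L * v)))) := by
    intro v
    rw [mul_left_comm, ← Complex.exp_add]
    congr 2
    push_cast
    field_simp
    ring
  simp only [hfactor, integral_const_mul, hscale, mul_smul_comm, smul_smul,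
    mul_inv_cancel₀ hL.ne', one_smul, mul_one]

noncomputable def dirichletPoly (s : Finset ℕ) (b : ℕ → ℂ) (t : ℝ) : ℂ :=
  ∑ n ∈ s, b n * cexp (-(I * t) * Real.log n)

@[fun_prop]
theorem continuous_dirichletPoly (s : Finset ℕ) (b : ℕ → ℂ) :
    Continuous (dirichletPoly s b) := by
  unfold dirichletPoly
  fun_prop

theorem norm_dirichletPoly_le {s : Finset ℕ} {b : ℕ → ℂ} (hb : ∀ n, ‖b n‖ ≤ 1) (t : ℝ) :
    ‖dirichletPoly s b t‖ ≤ s.card := by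
  calc ‖dirichletPoly s b t‖ ≤ ∑ n ∈ s, ‖b n * cexp (-(I * t) * Real.log n)‖ :=
        norm_sum_le _ _
    _ ≤ ∑ _n ∈ s, (1 : ℝ) := Finset.sum_le_sum fun n _ => by
        rw [norm_mul, norm_exp_neg_I_mul_mul, mul_one]
        exact hb n
    _ = s.card := by simp

theorem dirichletPoly_eq_smul_integral {ψ : ℝ → ℂ} {L : ℝ} {s : Finset ℕ} (hL : 0 < L)
    (hψ : Integrable ψ)
    (hψs : ∀ n ∈ s, ∫ x : ℝ, ψ x * cexp (-(I * ↑(Real.log n / L) * x)) = 1)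
    (b : ℕ → ℂ) (t : ℝ) :
    dirichletPoly s b t = L • ∫ v : ℝ, ψ (L * v) * dirichletPoly s b (t + v) := by
  have hint : ∀ n ∈ s, Integrable fun v : ℝ =>
      ψ (L * v) * (b n * cexp (-(I * ↑(t + v)) * Real.log n)) := fun n _ =>
    (hψ.comp_mul_left' hL.ne').mul_bdd (c := ‖b n‖) (by fun_prop)
      (ae_of_all _ fun v => by rw [norm_mul, norm_exp_neg_I_mul_mul, mul_one])
  simp only [dirichletPoly, Finset.mul_sum, integral_finsetSum s hint, Finset.smul_sum]
  refine Finset.sum_congr rfl fun n hn => ?_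
  rw [exp_mul_eq_smul_integral hL (hψs n hn) t, mul_smul_comm, ← integral_const_mul]
  simp only [mul_left_comm]

section StretchedExponentialKernel

variable {C L M : ℝ} {ψ F : ℝ → ℂ}

theorem nonneg_of_forall_norm_le_mul_exp {f : ℝ → ℝ} (hψ : ∀ x, ‖ψ x‖ ≤ C * rexp (f x)) :
    0 ≤ C :=
  nonneg_of_mul_nonneg_left ((norm_nonneg _).trans (hψ 0)) (exp_pos _)

theorem norm_comp_mul_le_of_le_abs (hψ : ∀ x, ‖ψ x‖ ≤ C * rexp (-|x| ^ ((2 : ℝ) / 3)))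
    (hL : 0 ≤ L) {v : ℝ} (hv : L ≤ |v|) :
    ‖ψ (L * v)‖ ≤
      C * rexp (-L ^ ((4 : ℝ) / 3) / 2) * rexp (-(1 / 2) * |L * v| ^ ((2 : ℝ) / 3)) := by
  have hC := nonneg_of_forall_norm_le_mul_exp hψ
  have hdecay := rpow_four_thirds_le_abs_mul_rpow hL hv
  calc ‖ψ (L * v)‖ ≤ C * rexp (-|L * v| ^ ((2 : ℝ) / 3)) := hψ _
    _ ≤ C * rexp (-L ^ ((4 : ℝ) / 3) / 2 + -(1 / 2) * |L * v| ^ ((2 : ℝ) / 3)) := by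
        gcongr
        linarith
    _ = _ := by rw [Real.exp_add, mul_assoc]

theorem setIntegral_compl_Ioo_norm_mul_le (hψ : ∀ x, ‖ψ x‖ ≤ C * rexp (-|x| ^ ((2 : ℝ) / 3)))
    (hFM : ∀ s, ‖F s‖ ≤ M) (hL : 0 < L) (t : ℝ) :
    ∫ v in (Ioo (-L) L)ᶜ, ‖ψ (L * v)‖ * ‖F (t + v)‖ ≤
      C * rexp (-L ^ ((4 : ℝ) / 3) / 2) * M *
        (L⁻¹ * ∫ x : ℝ, rexp (-(1 / 2) * |x| ^ ((2 : ℝ) / 3))) := by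
  have hC := nonneg_of_forall_norm_le_mul_exp hψ
  have hM : 0 ≤ M := (norm_nonneg _).trans (hFM 0)
  set A := C * rexp (-L ^ ((4 : ℝ) / 3) / 2) * M
  have hg : Integrable fun v : ℝ => A * rexp (-(1 / 2) * |L * v| ^ ((2 : ℝ) / 3)) :=
    ((integrable_exp_neg_mul_abs_rpow (by norm_num) (by norm_num)).comp_mul_left'
      hL.ne').const_mul A
  have hpoint : ∀ v ∈ (Ioo (-L) L)ᶜ, ‖ψ (L * v)‖ * ‖F (t + v)‖ ≤
      A * rexp (-(1 / 2) * |L * v| ^ ((2 : ℝ) / 3)) := by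
    intro v hv
    have hLv : L ≤ |v| := by
      rw [mem_compl_iff, mem_Ioo, not_and_or, not_lt, not_lt] at hv
      rcases hv with hv | hv
      · rw [abs_of_neg (by linarith)]; linarith
      · exact hv.trans (le_abs_self v)
    calc ‖ψ (L * v)‖ * ‖F (t + v)‖
        ≤ C * rexp (-L ^ ((4 : ℝ) / 3) / 2) * rexp (-(1 / 2) * |L * v| ^ ((2 : ℝ) / 3)) * M :=
          mul_le_mul (norm_comp_mul_le_of_le_abs hψ hL.le hLv) (hFM _) (norm_nonneg _)
            (by positivity)
      _ = _ := by ring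
  calc ∫ v in (Ioo (-L) L)ᶜ, ‖ψ (L * v)‖ * ‖F (t + v)‖
      ≤ ∫ v in (Ioo (-L) L)ᶜ, A * rexp (-(1 / 2) * |L * v| ^ ((2 : ℝ) / 3)) :=
        integral_mono_of_nonneg (ae_of_all _ fun v => by positivity) hg.integrableOn
          ((ae_restrict_iff' measurableSet_Ioo.compl).2 (ae_of_all _ hpoint))
    _ ≤ ∫ v : ℝ, A * rexp (-(1 / 2) * |L * v| ^ ((2 : ℝ) / 3)) :=
        setIntegral_le_integral hg (ae_of_all _ fun v => by positivity)
    _ = A * (L⁻¹ * ∫ x : ℝ, rexp (-(1 / 2) * |x| ^ ((2 : ℝ) / 3))) := by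
        rw [integral_const_mul, Measure.integral_comp_mul_left
          (fun x : ℝ => rexp (-(1 / 2) * |x| ^ ((2 : ℝ) / 3))), abs_of_pos (inv_pos.2 hL),
          smul_eq_mul]

theorem norm_le_of_eq_smul_integral (hψ : ∀ x, ‖ψ x‖ ≤ C * rexp (-|x| ^ ((2 : ℝ) / 3)))
    (hψi : Integrable ψ) (hF : Continuous F) (hFM : ∀ s, ‖F s‖ ≤ M) (hL : 0 < L) {t : ℝ}
    (hrepr : F t = L • ∫ v : ℝ, ψ (L * v) * F (t + v)) :
    ‖F t‖ ≤ C * L * (∫ v in Ioo (-L) L, ‖F (t + v)‖) +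
      C * rexp (-L ^ ((4 : ℝ) / 3) / 2) * M *
        ∫ x : ℝ, rexp (-(1 / 2) * |x| ^ ((2 : ℝ) / 3)) := by
  have hψC : ∀ x, ‖ψ x‖ ≤ C := fun x =>
    (hψ x).trans (mul_le_of_le_one_right (nonneg_of_forall_norm_le_mul_exp hψ)
      (exp_le_one_iff.2 (by simpa using rpow_nonneg (abs_nonneg x) _)))
  have hint : Integrable fun v : ℝ => ‖ψ (L * v)‖ * ‖F (t + v)‖ :=
    (hψi.comp_mul_left' hL.ne').norm.mul_bdd (c := M) (by fun_prop)
      (ae_of_all _ fun v => by simpa using hFM (t + v))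
  have hnear : ∫ v in Ioo (-L) L, ‖ψ (L * v)‖ * ‖F (t + v)‖ ≤
      C * (∫ v in Ioo (-L) L, ‖F (t + v)‖) := by
    rw [← integral_const_mul]
    refine integral_mono_of_nonneg (ae_of_all _ fun v => by positivity) ?_
      (ae_of_all _ fun v => mul_le_mul_of_nonneg_right (hψC _) (norm_nonneg _))
    exact ((by fun_prop : Continuous fun v => C * ‖F (t + v)‖).integrableOn_Icc).mono_set
      Ioo_subset_Icc_self
  calc ‖F t‖ ≤ L * ∫ v : ℝ, ‖ψ (L * v)‖ * ‖F (t + v)‖ := by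
        rw [hrepr, norm_smul, norm_of_nonneg hL.le]
        gcongr
        simpa only [norm_mul] using norm_integral_le_integral_norm fun v => ψ (L * v) * F (t + v)
    _ = L * ((∫ v in Ioo (-L) L, ‖ψ (L * v)‖ * ‖F (t + v)‖) +
          ∫ v in (Ioo (-L) L)ᶜ, ‖ψ (L * v)‖ * ‖F (t + v)‖) := by
        rw [integral_add_compl measurableSet_Ioo hint]
    _ ≤ L * (C * (∫ v in Ioo (-L) L, ‖F (t + v)‖) + C * rexp (-L ^ ((4 : ℝ) / 3) / 2) * M *
          (L⁻¹ * ∫ x : ℝ, rexp (-(1 / 2) * |x| ^ ((2 : ℝ) / 3)))) := by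
        gcongr
        exact setIntegral_compl_Ioo_norm_mul_le hψ hFM hL t
    _ = _ := by field_simp

end StretchedExponentialKernel

theorem norm_dirichletPoly_Ioc_le {C : ℝ} {ψ : ℝ → ℂ}
    (hψ : ∀ x, ‖ψ x‖ ≤ C * rexp (-|x| ^ ((2 : ℝ) / 3)))
    (hψ1 : ∀ ξ ∈ Icc (1 : ℝ) 2, ∫ x : ℝ, ψ x * cexp (-(I * ξ * x)) = 1)
    {N : ℕ} (hN : 2 ≤ N) {b : ℕ → ℂ} (hb : ∀ n, ‖b n‖ ≤ 1) (t : ℝ) :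
    ‖dirichletPoly (Finset.Ioc N (2 * N)) b t‖ ≤
      C * Real.log N * (∫ v in Ioo (-Real.log N) (Real.log N),
        ‖dirichletPoly (Finset.Ioc N (2 * N)) b (t + v)‖) +
      C * rexp 8 * ∫ x : ℝ, rexp (-(1 / 2) * |x| ^ ((2 : ℝ) / 3)) := by
  have hL : 0 < Real.log N := log_pos (by exact_mod_cast hN)
  have hψi : Integrable ψ := integrable_of_integral_mul_exp_ne_zero (ξ := 1)
    (by rw [hψ1 1 ⟨le_rfl, one_le_two⟩]; exact one_ne_zero)
  have hrepr := dirichletPoly_eq_smul_integral hL hψi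
    (fun n hn => hψ1 _ (log_div_log_mem_Icc hN (Finset.mem_Ioc.1 hn))) b t
  have hFN : ∀ s, ‖dirichletPoly (Finset.Ioc N (2 * N)) b s‖ ≤ rexp (Real.log N) := fun s =>
    (norm_dirichletPoly_le hb s).trans_eq (by
      rw [exp_log (by positivity), Nat.card_Ioc, two_mul, Nat.add_sub_cancel])
  have hexp : rexp (-Real.log N ^ ((4 : ℝ) / 3) / 2) * rexp (Real.log N) ≤ rexp 8 := by
    rw [← Real.exp_add]
    exact exp_le_exp.2 (by linarith [two_mul_le_rpow_four_thirds_add hL.le])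
  have hC := nonneg_of_forall_norm_le_mul_exp hψ
  refine (norm_le_of_eq_smul_integral hψ hψi (continuous_dirichletPoly _ b) hFN hL hrepr).trans ?_
  refine (add_le_add_iff_left _).2 (mul_le_mul_of_nonneg_right ?_ ?_)
  · rw [mul_assoc C]
    exact mul_le_mul_of_nonneg_left hexp hC
  · exact integral_nonneg fun x => (exp_pos _).le

/-- Bourgain's pointwise-to-average bound for Dirichlet polynomials: let
`F(t) = ∑_{N < n ≤ 2N} bₙ n^{-it}` with `|bₙ| ≤ 1`, and suppose `ψ : ℝ → ℂ` satisfies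
`|ψ(x)| ≤ C e^{-|x|^{2/3}}` and its Fourier transform is identically 1 on `[1,2]`. Then
`|F(t)| ≤ C' log N ∫_{|v| < log N} |F(t+v)| dv + C''` with `C', C''` depending only on `C`. -/
theorem stmt7 (C : ℝ) (hC : 0 < C) :
    ∃ C' C'' : ℝ, 0 < C' ∧ 0 < C'' ∧
      ∀ (ψ : ℝ → ℂ),
        (∀ x : ℝ, ‖ψ x‖ ≤ C * Real.exp (-|x| ^ ((2 : ℝ) / 3))) →
        (∀ ξ ∈ Set.Icc (1 : ℝ) 2,
          (∫ x : ℝ, ψ x * Complex.exp (-(Complex.I * ξ * x))) = 1) →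
        ∀ (N : ℕ), 2 ≤ N →
        ∀ (b : ℕ → ℂ), (∀ n, ‖b n‖ ≤ 1) →
        ∀ t : ℝ,
          ‖∑ n ∈ Finset.Ioc N (2 * N), b n * Complex.exp (-(Complex.I * t) * Real.log n)‖
            ≤ C' * Real.log N *
                ∫ v in Set.Ioo (-(Real.log N)) (Real.log N),
                  ‖∑ n ∈ Finset.Ioc N (2 * N),
                      b n * Complex.exp (-(Complex.I * (t + v)) * Real.log n)‖
              + C'' := by
  set K := ∫ x : ℝ, rexp (-(1 / 2) * |x| ^ ((2 : ℝ) / 3))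
  have hK : 0 < K := integral_exp_pos (integrable_exp_neg_mul_abs_rpow (by norm_num) (by norm_num))
  refine ⟨C, K * rexp 8 / (2 * Real.log 2 ^ 2), hC, by positivity, ?_⟩
  intro ψ hψ hψ1 N hN b hb t
  have hL2 : Real.log 2 ≤ Real.log N := log_le_log two_pos (by exact_mod_cast hN)
  have hL : 0 < Real.log N := (log_pos one_lt_two).trans_le hL2
  have hratio : 1 ≤ (Real.log N / Real.log 2) ^ 2 :=
    one_le_pow₀ ((one_le_div (log_pos one_lt_two)).2 hL2)
  -- The binder of `∫ v in _, _` extends to the end of the line, so `C''` is in the integrand.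
  simp only [← ofReal_add]
  change _ ≤ C * Real.log N * ∫ v in Ioo (-Real.log N) (Real.log N),
    (‖dirichletPoly (Finset.Ioc N (2 * N)) b (t + v)‖ + K * rexp 8 / (2 * Real.log 2 ^ 2))
  rw [setIntegral_Ioo_add_const hL.le
    ((Continuous.integrableOn_Icc (by fun_prop)).mono_set Ioo_subset_Icc_self)]
  calc _ ≤ _ := norm_dirichletPoly_Ioc_le hψ hψ1 hN hb t
    _ ≤ C * Real.log N * (∫ v in Ioo (-Real.log N) (Real.log N),
          ‖dirichletPoly (Finset.Ioc N (2 * N)) b (t + v)‖) +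
        C * rexp 8 * K * (Real.log N / Real.log 2) ^ 2 :=
      (add_le_add_iff_left _).2 (le_mul_of_one_le_right (by positivity) hratio)
    _ = _ := by field_simp
end
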